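/- arXiv:2306.15754 — 3 statements merged into one kernel-verified Lean document; each statement's English description precedes it below -/
import Mathlib

section
/- Let p : ℝ^n → ℝ be a polynomial with k = deg p ≥ n. Then p satisfies (PCC): there exist c₁ > 0, c₂ > 0, R₁ > 0 and a geodesic ball B_{r₁}(θ₀) ⊂ S^{n−1} such that |p(rθ)| ≥ c₁ r^k ≥ c₁ r^n for all r ≥ R₁ and θ ∈ B_{r₁}(θ₀), and |p(x)| ≤ c₂ |x|^k for all |x| ≥ R₁. -/
open MeasureTheory Metric Real MvPolynomial

/-- Evaluation of a real polynomial in `n` variables at a point of `ℝⁿ`. -/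
noncomputable def evalPoly {n : ℕ} (p : MvPolynomial (Fin n) ℝ)
    (x : EuclideanSpace ℝ (Fin n)) : ℝ :=
  MvPolynomial.eval (fun i => x i) p

lemma eval_mul_of_isHomogeneous {n k : ℕ} {q : MvPolynomial (Fin n) ℝ}
    (h : q.IsHomogeneous k) (r : ℝ) (x : Fin n → ℝ) :
    MvPolynomial.eval (fun i => r * x i) q = r ^ k * MvPolynomial.eval x q := by
  rw [eval_eq, eval_eq, Finset.mul_sum]
  refine Finset.sum_congr rfl fun d hd => ?_
  have hdeg : ∑ i ∈ d.support, d i = k := by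
    have := h (mem_support_iff.mp hd)
    rwa [Pi.one_def, ← Finsupp.degree_eq_weight_one, Finsupp.degree_apply] at this
  calc q.coeff d * ∏ i ∈ d.support, (r * x i) ^ d i
      = q.coeff d * ((∏ i ∈ d.support, r ^ d i) * ∏ i ∈ d.support, x i ^ d i) := by
        rw [← Finset.prod_mul_distrib]; simp [mul_pow]
    _ = r ^ k * (q.coeff d * ∏ i ∈ d.support, x i ^ d i) := by
        rw [Finset.prod_pow_eq_pow_sum, hdeg]; ring

lemma continuous_evalPoly {n : ℕ} (f : MvPolynomial (Fin n) ℝ) :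
    Continuous fun θ : EuclideanSpace ℝ (Fin n) =>
      MvPolynomial.eval (fun i => θ i) f := by
  have h1 : Continuous fun x : Fin n → ℝ => MvPolynomial.eval x f :=
    MvPolynomial.continuous_eval f
  have h2 := (PiLp.continuousLinearEquiv 2 ℝ (fun _ : Fin n => ℝ)).continuous
  exact h1.comp h2

/-- A polynomial `p` on `ℝⁿ` of degree `k ≥ n` satisfies `(PCC)`: there are constants
`c₁, c₂, R₁ > 0` and a geodesic ball `B_{r₁}(θ₀)` in the unit sphere `S^{n−1}` such that
`|p(rθ)| ≥ c₁ r^k ≥ c₁ r^n` for all `r ≥ R₁` and directions `θ` in the ball, while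
`|p(x)| ≤ c₂ |x|^k` for all `|x| ≥ R₁`. -/
theorem polynomial_satisfies_PCC (n : ℕ) (hn : 0 < n) (p : MvPolynomial (Fin n) ℝ)
    (hdeg : n ≤ p.totalDegree) :
    ∃ (c₁ c₂ R₁ r₁ : ℝ) (θ₀ : EuclideanSpace ℝ (Fin n)),
      0 < c₁ ∧ 0 < c₂ ∧ 0 < R₁ ∧ 0 < r₁ ∧ ‖θ₀‖ = 1 ∧
      (∀ (r : ℝ) (θ : EuclideanSpace ℝ (Fin n)), R₁ ≤ r → ‖θ‖ = 1 → ‖θ - θ₀‖ < r₁ →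
        c₁ * r ^ p.totalDegree ≤ |evalPoly p (r • θ)| ∧
        c₁ * r ^ n ≤ c₁ * r ^ p.totalDegree) ∧
      (∀ x : EuclideanSpace ℝ (Fin n), R₁ ≤ ‖x‖ →
        |evalPoly p x| ≤ c₂ * ‖x‖ ^ p.totalDegree) := by
  set k := p.totalDegree with hk
  have hk1 : 1 ≤ k := le_trans hn hdeg
  have hp0 : p ≠ 0 := by
    intro h
    rw [h, totalDegree_zero] at hk
    omega
  set q : ℕ → MvPolynomial (Fin n) ℝ := fun d => homogeneousComponent d p with hq
  have hqh : ∀ d, (q d).IsHomogeneous d := fun d => homogeneousComponent_isHomogeneous d p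
  have hsum : ∑ d ∈ Finset.range (k + 1), q d = p := sum_homogeneousComponent p
  -- evaluation along rays
  have key : ∀ (r : ℝ) (θ : EuclideanSpace ℝ (Fin n)),
      MvPolynomial.eval (fun i => r * θ i) p
        = ∑ d ∈ Finset.range (k + 1), r ^ d * MvPolynomial.eval (fun i => θ i) (q d) := by
    intro r θ
    conv_lhs => rw [← hsum]
    rw [map_sum]
    exact Finset.sum_congr rfl fun d _ => eval_mul_of_isHomogeneous (hqh d) r (fun i => θ i)
  -- top component nonzero
  have hqk : q k ≠ 0 := by
    obtain ⟨d, hd, hdk⟩ := p.support.exists_mem_eq_sup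
      (MvPolynomial.support_nonempty.mpr hp0) fun m => m.sum fun _ e => e
    intro h0
    have : coeff d (q k) = coeff d p := by
      rw [hq]
      simp only [coeff_homogeneousComponent]
      rw [if_pos]
      rw [Finsupp.degree, hk, totalDegree, hdk]
      rfl
    rw [h0, coeff_zero] at this
    exact mem_support_iff.mp hd this.symm
  -- point where top component is nonzero
  obtain ⟨y, hy⟩ : ∃ y : Fin n → ℝ, MvPolynomial.eval y (q k) ≠ 0 := by
    by_contra h
    push_neg at h
    exact hqk (MvPolynomial.funext fun x => by rw [h x, map_zero])
  have hy0 : y ≠ 0 := by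
    intro h
    apply hy
    have h2 := eval_mul_of_isHomogeneous (hqh k) 0 y
    simp only [zero_mul] at h2
    rw [show y = (fun _ => (0:ℝ)) by funext i; rw [h]; rfl, h2, zero_pow (by omega)]
    ring
  -- normalized direction θ₀
  set Y : EuclideanSpace ℝ (Fin n) := (WithLp.equiv 2 (Fin n → ℝ)).symm y with hY
  have hY0 : Y ≠ 0 := by
    intro h
    apply hy0
    funext i
    have : Y i = 0 := by rw [h]; rfl
    exact this
  have hYn : 0 < ‖Y‖ := norm_pos_iff.mpr hY0
  set θ₀ : EuclideanSpace ℝ (Fin n) := ‖Y‖⁻¹ • Y with hθ₀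
  have hθ₀n : ‖θ₀‖ = 1 := by
    rw [hθ₀, norm_smul, norm_inv, norm_norm, inv_mul_cancel₀ (ne_of_gt hYn)]
  have hθ₀i : ∀ i, θ₀ i = ‖Y‖⁻¹ * y i := fun i => rfl
  set a : ℝ := |MvPolynomial.eval (fun i => θ₀ i) (q k)| with ha'
  have ha : 0 < a := by
    rw [ha']
    apply abs_pos.mpr
    have : MvPolynomial.eval (fun i => θ₀ i) (q k)
        = (‖Y‖⁻¹) ^ k * MvPolynomial.eval y (q k) := by
      rw [show (fun i => θ₀ i) = fun i => ‖Y‖⁻¹ * y i from funext hθ₀i]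
      exact eval_mul_of_isHomogeneous (hqh k) _ y
    rw [this]
    exact mul_ne_zero (pow_ne_zero _ (inv_ne_zero (ne_of_gt hYn))) hy
  -- radius r₁ of the geodesic ball
  have hopen : IsOpen {θ : EuclideanSpace ℝ (Fin n) |
      a / 2 < |MvPolynomial.eval (fun i => θ i) (q k)|} :=
    isOpen_lt continuous_const (continuous_evalPoly (q k)).abs
  obtain ⟨r₁, hr₁, hball⟩ := Metric.isOpen_iff.mp hopen θ₀ (by
    simp only [Set.mem_setOf_eq, ← ha']
    linarith)
  have hball' : ∀ θ : EuclideanSpace ℝ (Fin n), ‖θ - θ₀‖ < r₁ →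
      a / 2 < |MvPolynomial.eval (fun i => θ i) (q k)| := by
    intro θ hθ
    exact hball (by rwa [Metric.mem_ball, dist_eq_norm])
  -- uniform bound on the unit sphere
  obtain ⟨M, hM⟩ : ∃ M : ℝ, ∀ θ : EuclideanSpace ℝ (Fin n), ‖θ‖ = 1 →
      ∀ d ∈ Finset.range (k + 1), |MvPolynomial.eval (fun i => θ i) (q d)| ≤ M := by
    set F : EuclideanSpace ℝ (Fin n) → ℝ :=
      fun θ => ∑ d ∈ Finset.range (k + 1), |MvPolynomial.eval (fun i => θ i) (q d)| with hF
    have hFc : Continuous F :=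
      continuous_finset_sum _ fun d _ => (continuous_evalPoly (q d)).abs
    obtain ⟨M, hM⟩ := (isCompact_sphere (0 : EuclideanSpace ℝ (Fin n)) 1).exists_bound_of_continuousOn
      hFc.continuousOn
    refine ⟨M, fun θ hθ d hd => ?_⟩
    have h1 : F θ ≤ M := by
      have := hM θ (by rwa [mem_sphere_zero_iff_norm])
      calc F θ ≤ |F θ| := le_abs_self _
        _ = ‖F θ‖ := rfl
        _ ≤ M := this
    calc |MvPolynomial.eval (fun i => θ i) (q d)| ≤ F θ := by
          show |MvPolynomial.eval (fun i => θ i) (q d)|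
            ≤ ∑ e ∈ Finset.range (k + 1), |MvPolynomial.eval (fun i => θ i) (q e)|
          exact Finset.single_le_sum
            (f := fun e => |MvPolynomial.eval (fun i => θ i) (q e)|)
            (fun e _ => abs_nonneg _) hd
      _ ≤ M := h1
  set M' : ℝ := max M 1 with hM'
  have hM'1 : 1 ≤ M' := le_max_right _ _
  have hM'0 : 0 < M' := lt_of_lt_of_le one_pos hM'1
  have hMd : ∀ θ : EuclideanSpace ℝ (Fin n), ‖θ‖ = 1 → ∀ d ∈ Finset.range (k + 1),
      |MvPolynomial.eval (fun i => θ i) (q d)| ≤ M' :=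
    fun θ hθ d hd => le_trans (hM θ hθ d hd) (le_max_left _ _)
  -- constants
  refine ⟨a / 4, (k + 1) * M', max 1 (4 * k * M' / a), r₁, θ₀,
    by linarith, by positivity, lt_of_lt_of_le one_pos (le_max_left _ _), hr₁, hθ₀n, ?_, ?_⟩
  · -- lower bound on the cone
    intro r θ hr hθn hθd
    have hr1 : (1 : ℝ) ≤ r := le_trans (le_max_left _ _) hr
    have hr0 : 0 < r := lt_of_lt_of_le one_pos hr1
    have hr2 : 4 * k * M' / a ≤ r := le_trans (le_max_right _ _) hr
    have hkM : (k : ℝ) * M' ≤ a / 4 * r := by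
      have h4 : 4 * (k : ℝ) * M' ≤ r * a := (div_le_iff₀ ha).mp hr2
      linarith
    constructor
    · have hev : evalPoly p (r • θ)
          = ∑ d ∈ Finset.range (k + 1), r ^ d * MvPolynomial.eval (fun i => θ i) (q d) := by
        have harg : (fun i => (r • θ) i) = fun i => r * θ i := by
          funext i
          simp [PiLp.smul_apply, smul_eq_mul]
        rw [evalPoly, harg, key]
      rw [hev, Finset.sum_range_succ]
      set S : ℝ := ∑ d ∈ Finset.range k, r ^ d * MvPolynomial.eval (fun i => θ i) (q d) with hS
      have hSb : |S| ≤ (k : ℝ) * (M' * r ^ (k - 1)) := by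
        calc |S| ≤ ∑ d ∈ Finset.range k, |r ^ d * MvPolynomial.eval (fun i => θ i) (q d)| :=
              Finset.abs_sum_le_sum_abs _ _
          _ ≤ ∑ _d ∈ Finset.range k, M' * r ^ (k - 1) := by
              refine Finset.sum_le_sum fun d hd => ?_
              rw [abs_mul, abs_pow, abs_of_pos hr0]
              have h1 : r ^ d ≤ r ^ (k - 1) :=
                pow_le_pow_right₀ hr1 (Nat.le_pred_of_lt (Finset.mem_range.mp hd))
              have h2 : |MvPolynomial.eval (fun i => θ i) (q d)| ≤ M' :=
                hMd θ hθn d (Finset.mem_range.mpr (Nat.lt_succ_of_lt (Finset.mem_range.mp hd)))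
              calc r ^ d * |MvPolynomial.eval (fun i => θ i) (q d)| ≤ r ^ (k - 1) * M' := by
                    apply mul_le_mul h1 h2 (abs_nonneg _) (pow_nonneg (le_of_lt hr0) _)
                _ = M' * r ^ (k - 1) := by ring
          _ = (k : ℝ) * (M' * r ^ (k - 1)) := by
              rw [Finset.sum_const, Finset.card_range, nsmul_eq_mul]
      have hSb2 : |S| ≤ a / 4 * r ^ k := by
        have hpow : r ^ k = r * r ^ (k - 1) := by
          rw [← pow_succ']
          congr 1
          omega
        calc |S| ≤ (k : ℝ) * (M' * r ^ (k - 1)) := hSb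
          _ = ((k : ℝ) * M') * r ^ (k - 1) := by ring
          _ ≤ (a / 4 * r) * r ^ (k - 1) := by
              apply mul_le_mul_of_nonneg_right hkM (pow_nonneg (le_of_lt hr0) _)
          _ = a / 4 * r ^ k := by rw [hpow]; ring
      have htop : a / 2 * r ^ k ≤ |r ^ k * MvPolynomial.eval (fun i => θ i) (q k)| := by
        rw [abs_mul, abs_pow, abs_of_pos hr0]
        have := le_of_lt (hball' θ hθd)
        calc a / 2 * r ^ k = r ^ k * (a / 2) := by ring
          _ ≤ r ^ k * |MvPolynomial.eval (fun i => θ i) (q k)| :=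
              mul_le_mul_of_nonneg_left this (pow_nonneg (le_of_lt hr0) _)
      have habs : |r ^ k * MvPolynomial.eval (fun i => θ i) (q k)| - |S|
          ≤ |S + r ^ k * MvPolynomial.eval (fun i => θ i) (q k)| := by
        have := abs_sub_abs_le_abs_sub (r ^ k * MvPolynomial.eval (fun i => θ i) (q k)) (-S)
        simpa [sub_neg_eq_add, add_comm] using this
      linarith
    · apply mul_le_mul_of_nonneg_left _ (by linarith : (0:ℝ) ≤ a / 4)
      exact pow_le_pow_right₀ hr1 hdeg
  · -- upper bound everywhere
    intro x hx
    have hx1 : (1 : ℝ) ≤ ‖x‖ := le_trans (le_max_left _ _) hx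
    have hx0 : 0 < ‖x‖ := lt_of_lt_of_le one_pos hx1
    set θx : EuclideanSpace ℝ (Fin n) := ‖x‖⁻¹ • x with hθx
    have hθxn : ‖θx‖ = 1 := by
      rw [hθx, norm_smul, norm_inv, norm_norm, inv_mul_cancel₀ (ne_of_gt hx0)]
    have hev : evalPoly p x
        = ∑ d ∈ Finset.range (k + 1), ‖x‖ ^ d * MvPolynomial.eval (fun i => θx i) (q d) := by
      have harg : (fun i => x i) = fun i => ‖x‖ * θx i := by
        funext i
        have h3 : θx i = ‖x‖⁻¹ * x i := rfl
        rw [h3]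
        field_simp
      rw [evalPoly, harg, key]
    rw [hev]
    calc |∑ d ∈ Finset.range (k + 1), ‖x‖ ^ d * MvPolynomial.eval (fun i => θx i) (q d)|
        ≤ ∑ d ∈ Finset.range (k + 1),
            |‖x‖ ^ d * MvPolynomial.eval (fun i => θx i) (q d)| :=
          Finset.abs_sum_le_sum_abs _ _
      _ ≤ ∑ _d ∈ Finset.range (k + 1), M' * ‖x‖ ^ k := by
          refine Finset.sum_le_sum fun d hd => ?_
          rw [abs_mul, abs_pow, abs_of_pos hx0]
          have h1 : ‖x‖ ^ d ≤ ‖x‖ ^ k :=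
            pow_le_pow_right₀ hx1 (by simp at hd; omega)
          have h2 : |MvPolynomial.eval (fun i => θx i) (q d)| ≤ M' := hMd θx hθxn d hd
          calc ‖x‖ ^ d * |MvPolynomial.eval (fun i => θx i) (q d)| ≤ ‖x‖ ^ k * M' :=
                mul_le_mul h1 h2 (abs_nonneg _) (pow_nonneg (le_of_lt hx0) _)
            _ = M' * ‖x‖ ^ k := by ring
      _ = ((k : ℝ) + 1) * M' * ‖x‖ ^ k := by
          rw [Finset.sum_const, Finset.card_range, nsmul_eq_mul]
          push_cast
          ring
end

section
/- Let n ≥ 2 be an even integer, let K : ℝ^n → ℝ be continuous with K e^{nw} ∈ L¹(ℝ^n) for a function w ∈ L^∞_loc(ℝ^n) solving the integral equation (IE). Then there is a constant C such that for every x₀ ∈ ℝ^n, ∫_{B₁(x₀)} |w(x)| dx ≤ C log(|x₀| + 2), where B₁(x₀) is the unit ball centered at x₀. -/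
open MeasureTheory Metric Real

/-- The Euclidean Laplacian of `u : ℝⁿ → ℝ` at `x`. -/
noncomputable def lap {n : ℕ} (u : EuclideanSpace ℝ (Fin n) → ℝ)
    (x : EuclideanSpace ℝ (Fin n)) : ℝ :=
  ∑ i : Fin n, iteratedFDeriv ℝ 2 u x (fun _ => EuclideanSpace.single i 1)

/-- The volume `ω_n` of the unit sphere `Sⁿ ⊂ ℝ^{n+1}`, expressed as `(n+1)` times the
Lebesgue volume of the unit ball of `ℝ^{n+1}`. -/
noncomputable def sphereVol (n : ℕ) : ℝ :=
  (n + 1) * (volume (ball (0 : EuclideanSpace ℝ (Fin (n + 1))) 1)).toReal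

/-- `w ∈ L^∞_loc(ℝⁿ)`: `w` is bounded on every bounded set. -/
def LocBdd {n : ℕ} (w : EuclideanSpace ℝ (Fin n) → ℝ) : Prop :=
  ∀ R : ℝ, ∃ M : ℝ, ∀ x : EuclideanSpace ℝ (Fin n), ‖x‖ ≤ R → |w x| ≤ M

/-- `w` solves the integral equation
`w(x) = (2/ω_n) ∫_{ℝⁿ} log(|y|/|x−y|) K(y) e^{n w(y)} dy`. -/
def SolvesIE (n : ℕ) (K w : EuclideanSpace ℝ (Fin n) → ℝ) : Prop :=
  ∀ x : EuclideanSpace ℝ (Fin n),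
    w x = (2 / sphereVol n) * ∫ y, Real.log (‖y‖ / ‖x - y‖) * (K y * Real.exp (n * w y))

/-- The polynomially cone condition with explicit exponent `γ`: outside the ball of radius
`R₁` one has `|K(x)| ≤ c₂ |x|^γ` everywhere, and `|K(x)| ≥ c₁ |x|^γ` on the cone with vertex
at the origin over the geodesic ball of radius `r₁` around the direction `θ₀`. -/
def PolyConeCondWith (n : ℕ) (γ : ℝ) (K : EuclideanSpace ℝ (Fin n) → ℝ) : Prop :=
  ∃ (R₁ c₁ c₂ r₁ : ℝ) (θ₀ : EuclideanSpace ℝ (Fin n)),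
    0 < R₁ ∧ 0 < c₁ ∧ 0 < c₂ ∧ 0 < r₁ ∧ ‖θ₀‖ = 1 ∧
    (∀ x : EuclideanSpace ℝ (Fin n), R₁ ≤ ‖x‖ → |K x| ≤ c₂ * ‖x‖ ^ γ) ∧
    (∀ x : EuclideanSpace ℝ (Fin n), R₁ ≤ ‖x‖ → ‖‖x‖⁻¹ • x - θ₀‖ < r₁ → c₁ * ‖x‖ ^ γ ≤ |K x|)

/-- The polynomially cone condition `(PCC)` for `K : ℝⁿ → ℝ`. -/
def PCC (n : ℕ) (K : EuclideanSpace ℝ (Fin n) → ℝ) : Prop :=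
  ∃ γ : ℝ, (n : ℝ) ≤ γ ∧ PolyConeCondWith n γ K

/-! For `x ∈ B₁(x₀)` the kernel satisfies
`|log (|y| / |x - y|)| ≤ log⁺ |y|⁻¹ + log⁺ |x - y|⁻¹ + log (|x₀| + 2)`, so the integral equation
bounds `|w x|` by three integrals against `|K e^{nw}|`. The first is finite because `K e^{nw}` is
bounded on the unit ball, outside of which `log⁺ |y|⁻¹` vanishes, and `log⁺ |·|⁻¹` is integrable.
Integrated over `x ∈ B₁(x₀)`, the second is, by Tonelli and translation invariance, at most
`‖log⁺ |·|⁻¹‖₁ ‖K e^{nw}‖₁`, and the third is `|B₁| ‖K e^{nw}‖₁ log (|x₀| + 2)`. -/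

open scoped ENNReal

namespace Real

lemma log_div_le_posLog_inv_add_log {a b R : ℝ} (ha : 0 ≤ a) (hb : 0 ≤ b) (hR : 0 ≤ R)
    (hab : a ≤ b + R) : log (a / b) ≤ log⁺ b⁻¹ + log (1 + R) := by
  -- at `b = 0` the junk values `a / 0 = 0` and `log 0 = 0` make the bound trivial
  rcases hb.eq_or_lt with rfl | hb
  · simpa using log_nonneg (by linarith : (1 : ℝ) ≤ 1 + R)
  have hquot : a / b ≤ (1 + R) * max 1 b⁻¹ := by
    calc a / b ≤ 1 + R * b⁻¹ := by
          rw [div_le_iff₀ hb, add_mul, inv_mul_cancel_right₀ hb.ne']; linarith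
      _ ≤ (1 + R) * max 1 b⁻¹ := by
          rw [add_mul, one_mul]; gcongr <;> simp
  calc log (a / b) ≤ log⁺ (a / b) := le_max_right _ _
    _ ≤ log⁺ ((1 + R) * max 1 b⁻¹) := posLog_le_posLog (by positivity) hquot
    _ ≤ log⁺ (1 + R) + log⁺ (max 1 b⁻¹) := posLog_mul
    _ = log⁺ b⁻¹ + log (1 + R) := by
      rw [posLog_eq_log (by rw [abs_of_nonneg (by linarith)]; linarith),
        posLog_eq_log (by rw [abs_of_nonneg (by positivity)]; exact le_max_left _ _),
        posLog_eq_log_max_one (by positivity), add_comm]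

lemma abs_log_div_le {a b R : ℝ} (ha : 0 ≤ a) (hb : 0 ≤ b) (hab : |a - b| ≤ R) :
    |log (a / b)| ≤ log⁺ a⁻¹ + log⁺ b⁻¹ + log (1 + R) := by
  have hR : 0 ≤ R := (abs_nonneg _).trans hab
  rw [abs_sub_le_iff] at hab
  have hle := log_div_le_posLog_inv_add_log ha hb hR (by linarith)
  have hge := log_div_le_posLog_inv_add_log hb ha hR (by linarith)
  rw [← inv_div, log_inv] at hge
  rw [abs_le]
  constructor <;> linarith [posLog_nonneg (x := a⁻¹), posLog_nonneg (x := b⁻¹)]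

lemma posLog_inv_eq_zero {x : ℝ} (hx : 1 ≤ x) : log⁺ x⁻¹ = 0 :=
  (posLog_eq_zero_iff _).2 <| by
    rw [abs_inv, abs_of_nonneg (by linarith)]
    exact inv_le_one_of_one_le₀ hx

lemma posLog_inv_le_two_mul_rpow {x : ℝ} (hx : 0 ≤ x) : log⁺ x⁻¹ ≤ 2 * x ^ (-(1 / 2 : ℝ)) := by
  have h := log_le_rpow_div (inv_nonneg.2 hx) (by norm_num : (0 : ℝ) < 1 / 2)
  rw [inv_rpow hx, ← rpow_neg hx] at h
  refine max_le (by positivity) (h.trans_eq ?_)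
  ring

end Real

section NormedGroup

variable {E : Type*} [NormedAddCommGroup E] [MeasurableSpace E] [BorelSpace E] {μ : Measure E}

lemma measurable_posLog_inv_norm : Measurable fun z : E => log⁺ ‖z‖⁻¹ :=
  continuous_posLog.measurable.comp measurable_norm.inv

lemma enorm_integral_log_norm_div_mul_le {f : E → ℝ} (hf : AEMeasurable f μ) (x : E) :
    ‖∫ y, log (‖y‖ / ‖x - y‖) * f y ∂μ‖ₑ ≤
      ∫⁻ y, ENNReal.ofReal (log⁺ ‖y‖⁻¹) * ‖f y‖ₑ ∂μ +
        ∫⁻ y, ENNReal.ofReal (log⁺ ‖x - y‖⁻¹) * ‖f y‖ₑ ∂μ +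
        ENNReal.ofReal (log (1 + ‖x‖)) * ∫⁻ y, ‖f y‖ₑ ∂μ := by
  have hF : AEMeasurable (fun y => ‖f y‖ₑ) μ := hf.enorm
  have haF : AEMeasurable (fun y => ENNReal.ofReal (log⁺ ‖y‖⁻¹) * ‖f y‖ₑ) μ :=
    measurable_posLog_inv_norm.ennreal_ofReal.aemeasurable.mul hF
  have hkernel (y : E) : ‖log (‖y‖ / ‖x - y‖)‖ₑ ≤ ENNReal.ofReal (log⁺ ‖y‖⁻¹) +
      ENNReal.ofReal (log⁺ ‖x - y‖⁻¹) + ENNReal.ofReal (log (1 + ‖x‖)) := by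
    have hdist : |‖y‖ - ‖x - y‖| ≤ ‖x‖ := by
      simpa [norm_sub_rev x y] using abs_norm_sub_norm_le y (y - x)
    rw [Real.enorm_eq_ofReal_abs, ← ENNReal.ofReal_add posLog_nonneg posLog_nonneg,
      ← ENNReal.ofReal_add (add_nonneg posLog_nonneg posLog_nonneg) (log_nonneg (by simp))]
    exact ENNReal.ofReal_le_ofReal (abs_log_div_le (norm_nonneg _) (norm_nonneg _) hdist)
  calc ‖∫ y, log (‖y‖ / ‖x - y‖) * f y ∂μ‖ₑ
      ≤ ∫⁻ y, ‖log (‖y‖ / ‖x - y‖)‖ₑ * ‖f y‖ₑ ∂μ := by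
        simpa only [enorm_mul] using enorm_integral_le_lintegral_enorm (μ := μ)
          (fun y => log (‖y‖ / ‖x - y‖) * f y)
    _ ≤ ∫⁻ y, (ENNReal.ofReal (log⁺ ‖y‖⁻¹) + ENNReal.ofReal (log⁺ ‖x - y‖⁻¹) +
          ENNReal.ofReal (log (1 + ‖x‖))) * ‖f y‖ₑ ∂μ := by
        gcongr with y
        exact hkernel y
    _ = _ := by
        simp_rw [add_mul]
        rw [lintegral_add_right' _ (hF.const_mul _),
          lintegral_add_left' haF, lintegral_const_mul'' _ hF]

variable [SecondCountableTopology E] [SFinite μ] [μ.IsAddRightInvariant]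

lemma setLIntegral_lintegral_sub_mul_le {g F : E → ℝ≥0∞} (hg : Measurable g)
    (hF : AEMeasurable F μ) (s : Set E) :
    ∫⁻ x in s, ∫⁻ y, g (x - y) * F y ∂μ ∂μ ≤ (∫⁻ z, g z ∂μ) * ∫⁻ y, F y ∂μ := by
  rw [lintegral_lintegral_swap ((hg.comp measurable_sub).aemeasurable.mul hF.comp_snd)]
  calc ∫⁻ y, ∫⁻ x in s, g (x - y) * F y ∂μ ∂μ
      ≤ ∫⁻ y, (∫⁻ z, g z ∂μ) * F y ∂μ := lintegral_mono fun y => by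
        have hgy : Measurable fun x => g (x - y) := hg.comp (measurable_sub_const y)
        rw [lintegral_mul_const _ hgy]
        exact mul_le_mul_left ((setLIntegral_le_lintegral _ _).trans_eq
          (lintegral_sub_right_eq_self g y)) _
    _ = (∫⁻ z, g z ∂μ) * ∫⁻ y, F y ∂μ := lintegral_const_mul'' _ hF

end NormedGroup

section FiniteDimensional

variable {E : Type*} [NormedAddCommGroup E] [NormedSpace ℝ E] [FiniteDimensional ℝ E]
  [MeasurableSpace E] [BorelSpace E] (μ : Measure E) [μ.IsAddHaarMeasure]

lemma integrable_posLog_inv_norm (hE : 1 ≤ Module.finrank ℝ E) :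
    Integrable (fun z : E => log⁺ ‖z‖⁻¹) μ := by
  have hsupp : Function.support (fun z : E => log⁺ ‖z‖⁻¹) ⊆ ball 0 1 := fun z hz => by
    by_contra h
    exact hz (posLog_inv_eq_zero (by simpa using h))
  refine (integrableOn_iff_integrable_of_support_subset hsupp).1 ?_
  refine integrableOn_ball_of_norm_le_rpow hE (C := 2) (α := 1 / 2)
    ((by norm_num : (1 / 2 : ℝ) < 1).trans_le (by exact_mod_cast hE))
    (Filter.Eventually.of_forall fun z => ?_) measurable_posLog_inv_norm.aestronglyMeasurable
  rw [Real.norm_of_nonneg posLog_nonneg]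
  exact posLog_inv_le_two_mul_rpow (norm_nonneg z)

lemma lintegral_posLog_inv_norm_mul_enorm_lt_top (hE : 1 ≤ Module.finrank ℝ E) {f : E → ℝ}
    {M : ℝ} (hf : ∀ y, ‖y‖ ≤ 1 → ‖f y‖ ≤ M) :
    ∫⁻ y, ENNReal.ofReal (log⁺ ‖y‖⁻¹) * ‖f y‖ₑ ∂μ < ∞ := by
  calc ∫⁻ y, ENNReal.ofReal (log⁺ ‖y‖⁻¹) * ‖f y‖ₑ ∂μ
      ≤ ∫⁻ y, ENNReal.ofReal (log⁺ ‖y‖⁻¹) * ENNReal.ofReal M ∂μ := lintegral_mono fun y => by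
        rcases le_or_gt ‖y‖ 1 with hy | hy
        · rw [← ofReal_norm]
          gcongr
          exact hf y hy
        · simp [posLog_inv_eq_zero hy.le]
    _ = (∫⁻ y, ENNReal.ofReal (log⁺ ‖y‖⁻¹) ∂μ) * ENNReal.ofReal M := 
        lintegral_mul_const _ measurable_posLog_inv_norm.ennreal_ofReal
    _ < ∞ := ENNReal.mul_lt_top (integrable_posLog_inv_norm μ hE).lintegral_lt_top
        ENNReal.ofReal_lt_top

lemma setLIntegral_ball_enorm_le {w f : E → ℝ} {c : ℝ}
    (hw : ∀ x, w x = c * ∫ y, log (‖y‖ / ‖x - y‖) * f y ∂μ) (hf : AEMeasurable f μ) (x₀ : E) :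
    ∫⁻ x in ball x₀ 1, ‖w x‖ₑ ∂μ ≤
      ‖c‖ₑ * (μ (ball 0 1) * ∫⁻ y, ENNReal.ofReal (log⁺ ‖y‖⁻¹) * ‖f y‖ₑ ∂μ +
        (∫⁻ z, ENNReal.ofReal (log⁺ ‖z‖⁻¹) ∂μ) * ∫⁻ y, ‖f y‖ₑ ∂μ) +
      ‖c‖ₑ * μ (ball 0 1) * (∫⁻ y, ‖f y‖ₑ ∂μ) * ENNReal.ofReal (log (‖x₀‖ + 2)) := by
  set a : E → ℝ≥0∞ := fun z => ENNReal.ofReal (log⁺ ‖z‖⁻¹)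
  set ℓ := ENNReal.ofReal (log (‖x₀‖ + 2))
  have hpointwise : ∀ x ∈ ball x₀ 1, ‖w x‖ₑ ≤ ‖c‖ₑ * (∫⁻ y, a y * ‖f y‖ₑ ∂μ +
      ∫⁻ y, a (x - y) * ‖f y‖ₑ ∂μ + ℓ * ∫⁻ y, ‖f y‖ₑ ∂μ) := fun x hx => by
    have hx : 1 + ‖x‖ ≤ ‖x₀‖ + 2 := by
      linarith [norm_le_norm_add_norm_sub' x x₀, (mem_ball_iff_norm.1 hx).le]
    rw [hw x, enorm_mul]
    gcongr ‖c‖ₑ * ?_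
    refine (enorm_integral_log_norm_div_mul_le hf x).trans ?_
    gcongr
    exact ENNReal.ofReal_le_ofReal (log_le_log (by positivity) hx)
  calc ∫⁻ x in ball x₀ 1, ‖w x‖ₑ ∂μ
      ≤ ∫⁻ x in ball x₀ 1, ‖c‖ₑ * (∫⁻ y, a y * ‖f y‖ₑ ∂μ +
          ∫⁻ y, a (x - y) * ‖f y‖ₑ ∂μ + ℓ * ∫⁻ y, ‖f y‖ₑ ∂μ) ∂μ :=
        setLIntegral_mono' measurableSet_ball hpointwise
    _ = ‖c‖ₑ * (μ (ball 0 1) * ∫⁻ y, a y * ‖f y‖ₑ ∂μ +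
          ∫⁻ x in ball x₀ 1, ∫⁻ y, a (x - y) * ‖f y‖ₑ ∂μ ∂μ +
          μ (ball 0 1) * (ℓ * ∫⁻ y, ‖f y‖ₑ ∂μ)) := by
        rw [lintegral_const_mul' _ _ enorm_ne_top, lintegral_add_right' _ aemeasurable_const,
          lintegral_add_left measurable_const, setLIntegral_const, setLIntegral_const,
          Measure.addHaar_ball_center, mul_comm _ (μ _), mul_comm _ (μ _)]
    _ ≤ ‖c‖ₑ * (μ (ball 0 1) * ∫⁻ y, a y * ‖f y‖ₑ ∂μ + (∫⁻ z, a z ∂μ) * ∫⁻ y, ‖f y‖ₑ ∂μ +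
          μ (ball 0 1) * (ℓ * ∫⁻ y, ‖f y‖ₑ ∂μ)) := by
        gcongr
        exact setLIntegral_lintegral_sub_mul_le measurable_posLog_inv_norm.ennreal_ofReal
          hf.enorm _
    _ = _ := by ring

end FiniteDimensional

lemma exists_setIntegral_ball_abs_le_mul_log {E : Type*} [NormedAddCommGroup E]
    [MeasurableSpace E] {μ : Measure E} {w : E → ℝ} {P Q : ℝ≥0∞} (hP : P ≠ ∞) (hQ : Q ≠ ∞)
    (hw : ∀ x₀, ∫⁻ x in ball x₀ 1, ‖w x‖ₑ ∂μ ≤ P + Q * ENNReal.ofReal (log (‖x₀‖ + 2))) :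
    ∃ C : ℝ, ∀ x₀, ∫ x in ball x₀ 1, |w x| ∂μ ≤ C * log (‖x₀‖ + 2) := by
  have hlog2 : 0 < log 2 := log_pos one_lt_two
  refine ⟨P.toReal / log 2 + Q.toReal, fun x₀ => ?_⟩
  have hℓ : log 2 ≤ log (‖x₀‖ + 2) := log_le_log two_pos (by linarith [norm_nonneg x₀])
  calc ∫ x in ball x₀ 1, |w x| ∂μ
      ≤ (∫⁻ x in ball x₀ 1, ‖w x‖ₑ ∂μ).toReal :=
        (le_abs_self _).trans (by
          simpa only [Real.norm_eq_abs, abs_abs, ← Real.enorm_eq_ofReal_abs] using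
            norm_integral_le_lintegral_norm (μ := μ.restrict (ball x₀ 1)) (fun x => |w x|))
    _ ≤ (P + Q * ENNReal.ofReal (log (‖x₀‖ + 2))).toReal :=
        ENNReal.toReal_mono (by finiteness) (hw x₀)
    _ = P.toReal + Q.toReal * log (‖x₀‖ + 2) := by
        rw [ENNReal.toReal_add hP (by finiteness), ENNReal.toReal_mul,
          ENNReal.toReal_ofReal (hlog2.le.trans hℓ)]
    _ ≤ (P.toReal / log 2 + Q.toReal) * log (‖x₀‖ + 2) := by
        rw [add_mul, div_mul_eq_mul_div]
        gcongr ?_ + _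
        rw [le_div_iff₀ hlog2]
        gcongr

theorem unit_ball_integral_bound_general (n : ℕ) (hn : 2 ≤ n)
    (K w : EuclideanSpace ℝ (Fin n) → ℝ)
    (hKcont : Continuous K)
    (hwloc : LocBdd w)
    (hIE : SolvesIE n K w)
    (hint : Integrable (fun y : EuclideanSpace ℝ (Fin n) => K y * Real.exp (n * w y))) :
    ∃ C : ℝ, ∀ x₀ : EuclideanSpace ℝ (Fin n),
      (∫ x in ball x₀ 1, |w x|) ≤ C * Real.log (‖x₀‖ + 2) := by
  have hdim : 1 ≤ Module.finrank ℝ (EuclideanSpace ℝ (Fin n)) := by simp; omega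
  obtain ⟨M, hM⟩ : ∃ M, ∀ y : EuclideanSpace ℝ (Fin n), ‖y‖ ≤ 1 →
      ‖K y * exp (n * w y)‖ ≤ M := by
    obtain ⟨MK, hMK⟩ :=
      (isCompact_closedBall (0 : EuclideanSpace ℝ (Fin n)) 1).exists_bound_of_continuousOn
        hKcont.continuousOn
    obtain ⟨Mw, hMw⟩ := hwloc 1
    refine ⟨MK * exp (n * Mw), fun y hy => ?_⟩
    rw [norm_mul, norm_of_nonneg (exp_pos _).le]
    gcongr
    · exact (norm_nonneg _).trans (hMK 0 (by simp))
    · exact hMK y (mem_closedBall_zero_iff.2 hy)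
    · exact (le_abs_self _).trans (hMw y hy)
  have hI := lintegral_posLog_inv_norm_mul_enorm_lt_top volume hdim hM
  have hA := (integrable_posLog_inv_norm volume hdim).lintegral_lt_top
  have hL := hint.hasFiniteIntegral
  exact exists_setIntegral_ball_abs_le_mul_log (by finiteness) (by finiteness)
    (setLIntegral_ball_enorm_le volume hIE hint.aemeasurable)

/-- Estimate (2.5): for a solution `w ∈ L^∞_loc` of the integral equation with
`K e^{nw} ∈ L¹(ℝⁿ)`, there is a constant `C` such that
`∫_{B₁(x₀)} |w| dx ≤ C log(|x₀| + 2)` for every `x₀`. -/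
theorem unit_ball_integral_bound (n : ℕ) (hn : 2 ≤ n) (hne : Even n)
    (K w : EuclideanSpace ℝ (Fin n) → ℝ)
    (hKcont : Continuous K)
    (hwloc : LocBdd w)
    (hIE : SolvesIE n K w)
    (hint : Integrable (fun y : EuclideanSpace ℝ (Fin n) => K y * Real.exp (n * w y))) :
    ∃ C : ℝ, ∀ x₀ : EuclideanSpace ℝ (Fin n),
      (∫ x in ball x₀ 1, |w x|) ≤ C * Real.log (‖x₀‖ + 2) :=
  unit_ball_integral_bound_general n hn K w hKcont hwloc hIE hint
end

section
/- Let v : ℝ² → ℝ be harmonic on all of ℝ² and suppose there is a constant C > 0 such that the unit-ball averages satisfy (1/|B₁(x₀)|) ∫_{B₁(x₀)} v(x) dx ≤ C + C log(2 + |x₀|) for every x₀ ∈ ℝ². Then v is constant. -/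
/-!
Write `v` in complex coordinates. The circle mean value property of harmonic functions, integrated
in polar coordinates, turns into the ball mean value property, so the hypothesis on ball averages
becomes the pointwise bound `v z ≤ C + C log (2 + |z|)`. For two points `z, w` and large `R`, the
function `M_R - v` with `M_R := C + C log (2 + |z| + R)` is nonnegative and harmonic on
`B_R(z)`, and comparing its averages over `B_{R - |w - z|}(w) ⊆ B_R(z)` (a Harnack inequality)
gives `v z - v w ≤ 2 |w - z| (M_R - v w) / R`, which tends to `0` because `M_R` grows only
logarithmically.
-/

open MeasureTheory Metric Real

open Set Filter Topology Asymptotics InnerProductSpace Laplacian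

theorem Asymptotics.IsLittleO.comp_const_add {g : ℝ → ℝ} (hg : g =o[atTop] id) (a : ℝ) :
    (fun x => g (a + x)) =o[atTop] id :=
  (hg.comp_tendsto (tendsto_atTop_add_const_left _ a tendsto_id)).trans_isBigO
    ((isLittleO_const_id_atTop a).isBigO.add (isBigO_refl _ _))

theorem MeasureTheory.MeasurePreserving.setAverage_preimage_emb {α β F : Type*}
    [NormedAddCommGroup F] [NormedSpace ℝ F] [MeasurableSpace α] [MeasurableSpace β]
    {μ : Measure α} {ν : Measure β} {g : α → β} (hg : MeasurePreserving g μ ν)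
    (hge : MeasurableEmbedding g) (f : β → F) (s : Set β) :
    ⨍ x in g ⁻¹' s, f (g x) ∂μ = ⨍ y in s, f y ∂ν := by
  rw [setAverage_eq, setAverage_eq, measureReal_def, measureReal_def,
    hg.measure_preimage_emb hge, hg.setIntegral_preimage_emb hge]

section Laplacian

variable {E E' F : Type*} [NormedAddCommGroup E] [InnerProductSpace ℝ E] [FiniteDimensional ℝ E]
  [NormedAddCommGroup E'] [InnerProductSpace ℝ E'] [FiniteDimensional ℝ E']
  [NormedAddCommGroup F] [NormedSpace ℝ F]

theorem lap_eq_laplacian {n : ℕ} (u : EuclideanSpace ℝ (Fin n) → ℝ) : lap u = Δ u := by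
  rw [laplacian_eq_iteratedFDeriv_orthonormalBasis u (EuclideanSpace.basisFun (Fin n) ℝ)]
  ext x
  simp only [lap, EuclideanSpace.basisFun_apply]
  congr! with i _ j
  fin_cases j <;> rfl

theorem harmonicAt_of_lap_eq_zero {n : ℕ} {u : EuclideanSpace ℝ (Fin n) → ℝ}
    (hu : ContDiff ℝ 2 u) (hlap : ∀ x, lap u x = 0) (x : EuclideanSpace ℝ (Fin n)) :
    HarmonicAt u x :=
  ⟨hu.contDiffAt, Eventually.of_forall fun y => by simpa [← lap_eq_laplacian] using hlap y⟩

theorem laplacian_comp_linearIsometryEquiv (f : E' → F) (e : E ≃ₗᵢ[ℝ] E') :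
    Δ (f ∘ e) = Δ f ∘ e := by
  let b := stdOrthonormalBasis ℝ E
  ext x
  have hcomp : iteratedFDeriv ℝ 2 (f ∘ e) x =
      (iteratedFDeriv ℝ 2 f (e x)).compContinuousLinearMap fun _ => (e : E →L[ℝ] E') := by
    have := e.toContinuousLinearEquiv.iteratedFDerivWithin_comp_right f uniqueDiffOn_univ
      (mem_univ (e x)) 2
    rw [preimage_univ, iteratedFDerivWithin_univ, iteratedFDerivWithin_univ] at this
    exact this
  rw [laplacian_eq_iteratedFDeriv_orthonormalBasis _ b,
    laplacian_eq_iteratedFDeriv_orthonormalBasis f (b.map e), Function.comp_apply]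
  dsimp only
  rw [hcomp]
  congr! with i
  rw [ContinuousMultilinearMap.compContinuousLinearMap_apply]
  congr 1
  ext j : 1
  fin_cases j <;> rfl

theorem InnerProductSpace.HarmonicAt.comp_linearIsometryEquiv {f : E' → F} (e : E ≃ₗᵢ[ℝ] E')
    {x : E} (hf : HarmonicAt f (e x)) : HarmonicAt (f ∘ e) x := by
  refine ⟨hf.1.comp x e.contDiff.contDiffAt, ?_⟩
  rw [laplacian_comp_linearIsometryEquiv]
  exact hf.2.comp_tendsto e.continuous.continuousAt

end Laplacian

section MeanValue

variable {F : Type*} [NormedAddCommGroup F] [NormedSpace ℝ F]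

theorem integral_Ioo_circleMap_eq_circleAverage (f : ℂ → F) (c : ℂ) (ρ : ℝ) :
    ∫ θ in Ioo (-π) π, f (circleMap c ρ θ) = (2 * π) • circleAverage f c ρ := by
  rw [circleAverage_eq_integral_add (-π), smul_inv_smul₀ (by positivity),
    intervalIntegral.integral_comp_add_right (fun θ => f (circleMap c ρ θ)),
    intervalIntegral.integral_of_le (by linarith [pi_pos]), integral_Ioc_eq_integral_Ioo,
    zero_add, show 2 * π + -π = π by ring]

theorem setIntegral_ball_eq_integral_circleAverage {f : ℂ → F} {c : ℂ} {r : ℝ}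
    (hf : ContinuousOn f (closedBall c r)) :
    ∫ z in ball c r, f z = ∫ ρ in Ioo 0 r, (2 * π * ρ) • circleAverage f c ρ := by
  set S : Set (ℝ × ℝ) := Ioo 0 r ×ˢ Ioo (-π) π
  set G : ℝ × ℝ → F := fun p => p.1 • f (circleMap c p.1 p.2)
  have hcirc : ∀ p : ℝ × ℝ, c + Complex.polarCoord.symm p = circleMap c p.1 p.2 := fun p => by
    simp only [Complex.polarCoord_symm_apply, circleMap, Complex.exp_mul_I]
    push_cast
    ring
  have hpolar : ∫ z in ball c r, f z = ∫ p in S, G p := by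
    calc ∫ z in ball c r, f z = ∫ z in ball 0 r, f (c + z) := by
          rw [← (measurePreserving_add_left volume c).setIntegral_preimage_emb
            (measurableEmbedding_addLeft c), preimage_add_ball, sub_self]
      _ = ∫ z, (ball 0 r).indicator (fun z => f (c + z)) z :=
          (integral_indicator measurableSet_ball).symm
      _ = ∫ p in Complex.polarCoord.target,
            p.1 • (ball 0 r).indicator (fun z => f (c + z)) (Complex.polarCoord.symm p) :=
          (Complex.integral_comp_polarCoord_symm _).symm
      _ = ∫ p in Complex.polarCoord.target, S.indicator G p := by
          refine setIntegral_congr_fun Complex.polarCoord.open_target.measurableSet fun p hp => ?_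
          rw [Complex.polarCoord_target] at hp
          have hnorm : ‖Complex.polarCoord.symm p‖ = p.1 := by
            rw [Complex.norm_polarCoord_symm, abs_of_pos hp.1]
          by_cases hpr : p.1 < r
          · rw [indicator_of_mem (by rwa [mem_ball_zero_iff, hnorm]),
              indicator_of_mem (show p ∈ S from ⟨⟨hp.1, hpr⟩, hp.2⟩), hcirc]
          · rw [indicator_of_notMem (by rwa [mem_ball_zero_iff, hnorm]),
              indicator_of_notMem fun h => hpr h.1.2, smul_zero]
      _ = ∫ p in S, G p := by
          rw [setIntegral_indicator (measurableSet_Ioo.prod measurableSet_Ioo),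
            inter_eq_self_of_subset_right]
          rw [Complex.polarCoord_target]
          exact prod_mono Ioo_subset_Ioi_self subset_rfl
  have hG : IntegrableOn G S (volume.prod volume) := by
    refine (ContinuousOn.integrableOn_compact (isCompact_Icc.prod isCompact_Icc) ?_).mono_set
      (prod_mono Ioo_subset_Icc_self Ioo_subset_Icc_self)
    refine continuousOn_fst.smul (hf.comp (by fun_prop) fun p hp => ?_)
    exact closedBall_subset_closedBall (by rw [abs_of_nonneg hp.1.1]; exact hp.1.2)
      (sphere_subset_closedBall (circleMap_mem_sphere' c p.1 p.2))
  rw [hpolar, Measure.volume_eq_prod, setIntegral_prod G hG]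
  refine setIntegral_congr_fun measurableSet_Ioo fun ρ _ => ?_
  rw [integral_smul, integral_Ioo_circleMap_eq_circleAverage, smul_smul, mul_comm ρ]

namespace InnerProductSpace

theorem HarmonicOnNhd.setIntegral_ball_eq [CompleteSpace F] {f : ℂ → F} {c : ℂ} {r : ℝ}
    (hf : HarmonicOnNhd f (closedBall c r)) (hr : 0 ≤ r) :
    ∫ z in ball c r, f z = (π * r ^ 2) • f c := by
  have hmean : ∀ ρ ∈ Ioo 0 r, (2 * π * ρ) • circleAverage f c ρ = (2 * π * ρ) • f c :=
    fun ρ hρ => by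
      have hsub : closedBall c |ρ| ⊆ closedBall c r :=
        closedBall_subset_closedBall ((abs_of_pos hρ.1).trans_le hρ.2.le)
      rw [(hf.mono hsub).circleAverage_eq]
  rw [setIntegral_ball_eq_integral_circleAverage hf.continuousOn,
    setIntegral_congr_fun measurableSet_Ioo hmean, integral_smul_const,
    ← integral_Ioc_eq_integral_Ioo, ← intervalIntegral.integral_of_le hr,
    intervalIntegral.integral_const_mul, integral_id]
  congr 1
  ring

theorem HarmonicOnNhd.setAverage_ball_eq [CompleteSpace F] {f : ℂ → F} {c : ℂ} {r : ℝ}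
    (hf : HarmonicOnNhd f (closedBall c r)) (hr : 0 < r) :
    ⨍ z in ball c r, f z = f c := by
  rw [setAverage_eq, hf.setIntegral_ball_eq hr.le, measureReal_def, Complex.volume_ball,
    smul_smul]
  convert one_smul ℝ (f c)
  simp [ENNReal.toReal_ofReal hr.le]
  field_simp

theorem HarmonicOnNhd.harnack_of_nonneg {h : ℂ → ℝ} {x y : ℂ} {R : ℝ}
    (hh : HarmonicOnNhd h (closedBall x R)) (h0 : ∀ z ∈ ball x R, 0 ≤ h z)
    (hy : dist y x < R) :
    (R - dist y x) ^ 2 * h y ≤ R ^ 2 * h x := by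
  set ρ := R - dist y x
  have hρ : 0 ≤ ρ := by linarith [dist_nonneg (x := y) (y := x)]
  have hball : ball y ρ ⊆ ball x R := ball_subset_ball' (by simp [ρ])
  have hclosedBall : closedBall y ρ ⊆ closedBall x R := closedBall_subset_closedBall' (by simp [ρ])
  have hint : ∫ z in ball y ρ, h z ≤ ∫ z in ball x R, h z :=
    setIntegral_mono_set
      ((hh.continuousOn.integrableOn_compact (isCompact_closedBall x R)).mono_set
        ball_subset_closedBall)
      ((ae_restrict_iff' measurableSet_ball).mpr (ae_of_all _ h0))
      hball.eventuallyLE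
  rw [(hh.mono hclosedBall).setIntegral_ball_eq hρ,
    hh.setIntegral_ball_eq (hρ.trans (by simp [ρ])), smul_eq_mul, smul_eq_mul,
    mul_assoc, mul_assoc] at hint
  exact le_of_mul_le_mul_left hint pi_pos

theorem HarmonicOnNhd.apply_eq_apply_of_le_isLittleO {f : ℂ → ℝ} (hf : HarmonicOnNhd f univ)
    {g : ℝ → ℝ} (hg_mono : MonotoneOn g (Ici 0)) (hg : g =o[atTop] id)
    (hfg : ∀ z, f z ≤ g ‖z‖) (z w : ℂ) : f z = f w := by
  suffices key : ∀ z w, f z ≤ f w from le_antisymm (key z w) (key w z)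
  intro z w
  set d := dist w z with hd
  set M : ℝ → ℝ := fun R => g (‖z‖ + R)
  have hM : ∀ R, ∀ ζ ∈ ball z R, f ζ ≤ M R := fun R ζ hζ => by
    have hζz : ‖ζ‖ ≤ ‖z‖ + R := by
      have := norm_le_norm_add_norm_sub' ζ z
      linarith [mem_ball_iff_norm.mp hζ]
    exact (hfg ζ).trans (hg_mono (norm_nonneg ζ) ((norm_nonneg ζ).trans hζz) hζz)
  have hest : ∀ R, d < R → f z - f w ≤ 2 * d * ((M R - f w) / R) := by
    intro R hR
    have hR0 : 0 < R := lt_of_le_of_lt dist_nonneg hR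
    have hharnack := HarmonicOnNhd.harnack_of_nonneg (h := fun ζ => M R - f ζ)
      ((harmonicOnNhd_const (M R)).sub (hf.mono (subset_univ _)))
      (fun ζ hζ => sub_nonneg.mpr (hM R ζ hζ)) hR
    rw [← hd] at hharnack
    have hw : 0 ≤ M R - f w := sub_nonneg.mpr (hM R w hR)
    rw [mul_div_assoc', le_div_iff₀ hR0]
    nlinarith [mul_nonneg (sq_nonneg d) hw]
  have hlim : Tendsto (fun R => 2 * d * ((M R - f w) / R)) atTop (𝓝 0) := by
    have : (fun R => M R - f w) =o[atTop] id :=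
      (hg.comp_const_add ‖z‖).sub (isLittleO_const_id_atTop _)
    simpa using this.tendsto_div_nhds_zero.const_mul (2 * d)
  exact sub_nonpos.mp (ge_of_tendsto hlim ((eventually_gt_atTop d).mono hest))

end InnerProductSpace

end MeanValue

/-- A harmonic function on `ℝ²` whose unit-ball averages grow at most logarithmically
from above is constant. -/
theorem harmonic_log_growth_constant (v : EuclideanSpace ℝ (Fin 2) → ℝ)
    (hsmooth : ContDiff ℝ 2 v) (hharm : ∀ x, lap v x = 0)
    (C : ℝ) (hC : 0 < C)
    (havg : ∀ x₀ : EuclideanSpace ℝ (Fin 2),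
      (⨍ x in ball x₀ 1, v x) ≤ C + C * Real.log (2 + ‖x₀‖)) :
    ∃ c : ℝ, ∀ x, v x = c := by
  let e : ℂ ≃ₗᵢ[ℝ] EuclideanSpace ℝ (Fin 2) := Complex.orthonormalBasisOneI.repr
  have hu : HarmonicOnNhd (v ∘ e) univ := fun z _ =>
    (harmonicAt_of_lap_eq_zero hsmooth hharm (e z)).comp_linearIsometryEquiv e
  have hbound : ∀ z, (v ∘ e) z ≤ C + C * log (2 + ‖z‖) := fun z => by
    have htransfer := e.measurePreserving.setAverage_preimage_emb
      e.toMeasurableEquiv.measurableEmbedding v (ball (e z) 1)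
    rw [e.preimage_ball, e.symm_apply_apply] at htransfer
    calc (v ∘ e) z = ⨍ ζ in ball z 1, v (e ζ) :=
          ((hu.mono (subset_univ _)).setAverage_ball_eq one_pos).symm
      _ = ⨍ x in ball (e z) 1, v x := htransfer
      _ ≤ C + C * log (2 + ‖e z‖) := havg (e z)
      _ = C + C * log (2 + ‖z‖) := by rw [e.norm_map]
  have hmono : MonotoneOn (fun R => C + C * log (2 + R)) (Ici 0) := fun a (ha : 0 ≤ a) b _ hab => by
    dsimp only
    gcongr
  have hsublinear : (fun R => C + C * log (2 + R)) =o[atTop] id :=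
    (isLittleO_const_id_atTop C).add ((isLittleO_log_id_atTop.comp_const_add 2).const_mul_left C)
  have hconst := hu.apply_eq_apply_of_le_isLittleO hmono hsublinear hbound
  exact ⟨v (e 0), fun x => by simpa using hconst (e.symm x) 0⟩
end
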